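/- arXiv:2511.10141 — 3 statements merged into one kernel-verified Lean document; each statement's English description precedes it below -/
import Mathlib

section
/- For any tessarine vectors x, y ∈ 𝕋ⁿ, the augmented vector of the componentwise product x ⋆ y satisfies \overline{x ⋆ y} = 𝒟^x ȳ, where 𝒟^x = 𝒥ₙ diag(xʳ) 𝒥ₙᴴ, xʳ ∈ ℝ^{4n} is the real vector of x, and ȳ ∈ 𝕋^{4n} is the augmented vector of y. -/
open MeasureTheory Matrix
open scoped Kronecker

noncomputable section

/-- The tessarine algebra `𝕋`: the 4-dimensional commutative real algebra with basis
`{1, ı, ȷ, κ}` and multiplication rules `ı² = κ² = −1`, `ȷ² = 1`, `ıȷ = κ`, `ȷκ = ı`, `κı = −ȷ`. -/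
@[ext] structure Tess : Type where
  re  : ℝ
  imI : ℝ
  imJ : ℝ
  imK : ℝ

namespace Tess

instance : Zero Tess := ⟨⟨0,0,0,0⟩⟩
instance : One Tess := ⟨⟨1,0,0,0⟩⟩
instance : Add Tess := ⟨fun a b => ⟨a.re+b.re, a.imI+b.imI, a.imJ+b.imJ, a.imK+b.imK⟩⟩
instance : Neg Tess := ⟨fun a => ⟨-a.re, -a.imI, -a.imJ, -a.imK⟩⟩
instance : Mul Tess := ⟨fun a b =>
  ⟨a.re*b.re - a.imI*b.imI + a.imJ*b.imJ - a.imK*b.imK,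
   a.re*b.imI + a.imI*b.re + a.imJ*b.imK + a.imK*b.imJ,
   a.re*b.imJ + a.imJ*b.re - a.imI*b.imK - a.imK*b.imI,
   a.re*b.imK + a.imK*b.re + a.imI*b.imJ + a.imJ*b.imI⟩⟩

@[simp] lemma zero_re : (0 : Tess).re = 0 := rfl
@[simp] lemma zero_imI : (0 : Tess).imI = 0 := rfl
@[simp] lemma zero_imJ : (0 : Tess).imJ = 0 := rfl
@[simp] lemma zero_imK : (0 : Tess).imK = 0 := rfl
@[simp] lemma one_re : (1 : Tess).re = 1 := rfl
@[simp] lemma one_imI : (1 : Tess).imI = 0 := rfl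
@[simp] lemma one_imJ : (1 : Tess).imJ = 0 := rfl
@[simp] lemma one_imK : (1 : Tess).imK = 0 := rfl
@[simp] lemma add_re (a b : Tess) : (a+b).re = a.re+b.re := rfl
@[simp] lemma add_imI (a b : Tess) : (a+b).imI = a.imI+b.imI := rfl
@[simp] lemma add_imJ (a b : Tess) : (a+b).imJ = a.imJ+b.imJ := rfl
@[simp] lemma add_imK (a b : Tess) : (a+b).imK = a.imK+b.imK := rfl
@[simp] lemma neg_re (a : Tess) : (-a).re = -a.re := rfl
@[simp] lemma neg_imI (a : Tess) : (-a).imI = -a.imI := rfl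
@[simp] lemma neg_imJ (a : Tess) : (-a).imJ = -a.imJ := rfl
@[simp] lemma neg_imK (a : Tess) : (-a).imK = -a.imK := rfl
@[simp] lemma mul_re (a b : Tess) :
    (a*b).re = a.re*b.re - a.imI*b.imI + a.imJ*b.imJ - a.imK*b.imK := rfl
@[simp] lemma mul_imI (a b : Tess) :
    (a*b).imI = a.re*b.imI + a.imI*b.re + a.imJ*b.imK + a.imK*b.imJ := rfl
@[simp] lemma mul_imJ (a b : Tess) :
    (a*b).imJ = a.re*b.imJ + a.imJ*b.re - a.imI*b.imK - a.imK*b.imI := rfl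
@[simp] lemma mul_imK (a b : Tess) :
    (a*b).imK = a.re*b.imK + a.imK*b.re + a.imI*b.imJ + a.imJ*b.imI := rfl

instance : CommRing Tess where
  add := (· + ·)
  zero := 0
  neg := Neg.neg
  mul := (· * ·)
  one := 1
  add_assoc a b c := by ext <;> simp <;> ring
  zero_add a := by ext <;> simp
  add_zero a := by ext <;> simp
  add_comm a b := by ext <;> simp <;> ring
  left_distrib a b c := by ext <;> simp <;> ring
  right_distrib a b c := by ext <;> simp <;> ring
  zero_mul a := by ext <;> simp
  mul_zero a := by ext <;> simp
  mul_assoc a b c := by ext <;> simp <;> ring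
  one_mul a := by ext <;> simp
  mul_one a := by ext <;> simp
  mul_comm a b := by ext <;> simp <;> ring
  neg_add_cancel a := by ext <;> simp
  nsmul := nsmulRec
  zsmul := zsmulRec

end Tess
namespace Tess

/-- Tessarine conjugation `x* = x_r − ı x_ı + ȷ x_ȷ − κ x_κ`. -/
def conj (x : Tess) : Tess := ⟨x.re, -x.imI, x.imJ, -x.imK⟩
/-- Auxiliary conjugation `x^ı = x_r + ı x_ı − ȷ x_ȷ − κ x_κ`. -/
def conjI (x : Tess) : Tess := ⟨x.re, x.imI, -x.imJ, -x.imK⟩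
/-- Auxiliary conjugation `x^κ = x_r − ı x_ı − ȷ x_ȷ + κ x_κ`. -/
def conjK (x : Tess) : Tess := ⟨x.re, -x.imI, -x.imJ, x.imK⟩
/-- Embedding of the reals into the tessarines. -/
def ofReal (a : ℝ) : Tess := ⟨a, 0, 0, 0⟩
/-- The imaginary unit `ı`. -/
def unitI : Tess := ⟨0,1,0,0⟩
/-- The imaginary unit `ȷ`. -/
def unitJ : Tess := ⟨0,0,1,0⟩
/-- The imaginary unit `κ`. -/
def unitK : Tess := ⟨0,0,0,1⟩
/-- The four real components of a tessarine, indexed by `ν ∈ {r, ı, ȷ, κ}` (as `Fin 4`). -/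
def comp (ν : Fin 4) (x : Tess) : ℝ := ![x.re, x.imI, x.imJ, x.imK] ν
/-- The product `⋆` of two tessarines:
`a ⋆ b = a_r b_r + ı a_ı b_ı + ȷ a_ȷ b_ȷ + κ a_κ b_κ`. -/
def star4 (a b : Tess) : Tess := ⟨a.re*b.re, a.imI*b.imI, a.imJ*b.imJ, a.imK*b.imK⟩

instance : MeasurableSpace Tess :=
  MeasurableSpace.comap (fun x : Tess => (x.re, x.imI, x.imJ, x.imK)) inferInstance

end Tess

/-- The conjugations `id, (·)*, (·)^ı, (·)^κ`, indexed by `Fin 4`. -/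
def cnu : Fin 4 → Tess → Tess := ![id, Tess.conj, Tess.conjI, Tess.conjK]

/-- Hermitian (conjugate) transpose of a tessarine matrix: transpose composed with
entrywise tessarine conjugation. -/
def Matrix.hT {m n : Type*} (M : Matrix m n Tess) : Matrix n m Tess :=
  Matrix.of fun a b => Tess.conj (M b a)

/-- Componentwise `⋆` product of two tessarine vectors. -/
def vstar {n : ℕ} (x y : Fin n → Tess) : Fin n → Tess := fun j => Tess.star4 (x j) (y j)

/-- The augmented vector `x̄ = [xᵀ, xᴴ, x^ıᵀ, x^κᵀ]ᵀ ∈ 𝕋^{4n}` of `x ∈ 𝕋ⁿ`. -/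
def augv {n : ℕ} (x : Fin n → Tess) : Fin 4 × Fin n → Tess :=
  fun p => cnu p.1 (x p.2)

/-- The real vector `xʳ = [x_rᵀ, x_ıᵀ, x_ȷᵀ, x_κᵀ]ᵀ ∈ ℝ^{4n}` of `x ∈ 𝕋ⁿ`. -/
def realv {n : ℕ} (x : Fin n → Tess) : Fin 4 × Fin n → ℝ :=
  fun p => Tess.comp p.1 (x p.2)

/-- The `4 × 4` tessarine matrix `𝒜` with rows `(1, ı, ȷ, κ)`, `(1, −ı, ȷ, −κ)`,
`(1, ı, −ȷ, −κ)`, `(1, −ı, −ȷ, κ)`. -/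
def tessA : Matrix (Fin 4) (Fin 4) Tess :=
  !![1,  Tess.unitI,  Tess.unitJ,  Tess.unitK;
     1, -Tess.unitI,  Tess.unitJ, -Tess.unitK;
     1,  Tess.unitI, -Tess.unitJ, -Tess.unitK;
     1, -Tess.unitI, -Tess.unitJ,  Tess.unitK]

/-- The matrix `𝒥ₙ = (1/2) 𝒜 ⊗ Iₙ`. -/
def Jn (n : ℕ) : Matrix (Fin 4 × Fin n) (Fin 4 × Fin n) Tess :=
  Tess.ofReal (1/2) • (tessA ⊗ₖ (1 : Matrix (Fin n) (Fin n) Tess))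

/-- Componentwise expectation of a tessarine-valued random variable. -/
def texp {Ω : Type*} [MeasurableSpace Ω] (μ : Measure Ω) (f : Ω → Tess) : Tess :=
  ⟨∫ ω, (f ω).re ∂μ, ∫ ω, (f ω).imI ∂μ, ∫ ω, (f ω).imJ ∂μ, ∫ ω, (f ω).imK ∂μ⟩

/-- The pseudo-cross-correlation matrix `Γ_{xy} = E[x yᴴ]` of two tessarine random vectors. -/
def Gamma {Ω m m' : Type*} [MeasurableSpace Ω] (μ : Measure Ω)
    (x : Ω → m → Tess) (y : Ω → m' → Tess) : Matrix m m' Tess :=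
  Matrix.of fun a b => texp μ (fun ω => x ω a * Tess.conj (y ω b))

/-- Entrywise expectation of a random tessarine matrix. -/
def texpM {Ω m m' : Type*} [MeasurableSpace Ω] (μ : Measure Ω)
    (F : Ω → Matrix m m' Tess) : Matrix m m' Tess :=
  Matrix.of fun a b => texp μ (fun ω => F ω a b)

/-- A tessarine random vector has zero mean. -/
def ZeroMean {Ω m : Type*} [MeasurableSpace Ω] (μ : Measure Ω) (x : Ω → m → Tess) : Prop :=
  ∀ a, texp μ (fun ω => x ω a) = 0

/-- A tessarine random vector is second order: all its real components are in `L²`. -/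
def SecondOrder {Ω m : Type*} [MeasurableSpace Ω] (μ : Measure Ω) (x : Ω → m → Tess) : Prop :=
  ∀ a ν, MemLp (fun ω => Tess.comp ν (x ω a)) 2 μ

section Properness

variable {Ω T T' m m' : Type*} [MeasurableSpace Ω] (μ : Measure Ω)

/-- Vanishing of the pseudo-cross-correlations `Γ_{x y^ν}(t,s)`, `ν = *, ı, κ`
(cross `𝕋₁`-properness). -/
def CrossT1 (x : T → Ω → m → Tess) (y : T' → Ω → m' → Tess) : Prop :=
  ∀ t s, Gamma μ (x t) (fun ω => Tess.conj ∘ y s ω) = 0 ∧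
    Gamma μ (x t) (fun ω => Tess.conjI ∘ y s ω) = 0 ∧
    Gamma μ (x t) (fun ω => Tess.conjK ∘ y s ω) = 0

/-- Vanishing of the pseudo-cross-correlations `Γ_{x y^ν}(t,s)`, `ν = ı, κ`
(cross `𝕋₂`-properness). -/
def CrossT2 (x : T → Ω → m → Tess) (y : T' → Ω → m' → Tess) : Prop :=
  ∀ t s, Gamma μ (x t) (fun ω => Tess.conjI ∘ y s ω) = 0 ∧
    Gamma μ (x t) (fun ω => Tess.conjK ∘ y s ω) = 0

/-- A tessarine signal is `𝕋₁`-proper. -/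
def T1proper (x : T → Ω → m → Tess) : Prop := CrossT1 μ x x

/-- A tessarine signal is `𝕋₂`-proper. -/
def T2proper (x : T → Ω → m → Tess) : Prop := CrossT2 μ x x

/-- Two tessarine signals are jointly `𝕋₁`-proper. -/
def JointlyT1 (x : T → Ω → m → Tess) (y : T → Ω → m' → Tess) : Prop :=
  T1proper μ x ∧ T1proper μ y ∧ CrossT1 μ x y

/-- Two tessarine signals are jointly `𝕋₂`-proper. -/
def JointlyT2 (x : T → Ω → m → Tess) (y : T → Ω → m' → Tess) : Prop :=
  T2proper μ x ∧ T2proper μ y ∧ CrossT2 μ x y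

end Properness

/-- `est` is a linear MMSE estimator of `target` based on the observations
`obs 1, …, obs s`: it is a (tessarine-) linear combination of the observations and the
estimation error is orthogonal to each observation. -/
def IsLMMSE {Ω m m' : Type*} [MeasurableSpace Ω] [Fintype m'] (μ : Measure Ω)
    (target : Ω → m → Tess) (obs : ℕ → Ω → m' → Tess) (s : ℕ) (est : Ω → m → Tess) : Prop :=
  (∃ C : ℕ → Matrix m m' Tess, ∀ ω, est ω = ∑ j ∈ Finset.Icc 1 s, (C j).mulVec (obs j ω)) ∧
  ∀ j, 1 ≤ j → j ≤ s → Gamma μ (fun ω => target ω - est ω) (obs j) = 0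

/-- The `k`-lift of a tessarine vector: for `k = 1` the vector itself, for `k = 2`
the vector `[xᵀ, xᴴ]ᵀ`. -/
def klift {k n : ℕ} (x : Fin n → Tess) : Fin k × Fin n → Tess :=
  fun p => if p.1.val = 0 then x p.2 else Tess.conj (x p.2)

/-!
Since `x̄ = 2𝒥ₙ xʳ` and `𝒥ₙᴴ𝒥ₙ = I` (the matrix `𝒜/2` is unitary), we get
`𝒟^x ȳ = 𝒥ₙ diag(xʳ) 𝒥ₙᴴ (2𝒥ₙ yʳ) = 2𝒥ₙ (xʳ ⊙ yʳ) = 2𝒥ₙ (x ⋆ y)ʳ = \overline{x ⋆ y}`.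
-/

namespace Tess

@[simp] lemma ofReal_re (a : ℝ) : (ofReal a).re = a := rfl
@[simp] lemma ofReal_imI (a : ℝ) : (ofReal a).imI = 0 := rfl
@[simp] lemma ofReal_imJ (a : ℝ) : (ofReal a).imJ = 0 := rfl
@[simp] lemma ofReal_imK (a : ℝ) : (ofReal a).imK = 0 := rfl

lemma ofReal_mul (a b : ℝ) : ofReal (a * b) = ofReal a * ofReal b := by
  ext <;> simp

@[simp] lemma ofReal_one : ofReal 1 = 1 := rfl

lemma conj_mul (a b : Tess) : conj (a * b) = conj a * conj b := by
  ext <;> simp [conj] <;> ring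

@[simp] lemma conj_zero : conj 0 = 0 := by ext <;> simp [conj]
@[simp] lemma conj_one : conj 1 = 1 := by ext <;> simp [conj]

lemma comp_star4 (ρ : Fin 4) (u v : Tess) : comp ρ (star4 u v) = comp ρ u * comp ρ v := by
  fin_cases ρ <;> rfl

lemma cnu_eq_sum_tessA_mul_comp (μ : Fin 4) (u : Tess) :
    cnu μ u = ∑ ρ, tessA μ ρ * ofReal (comp ρ u) := by
  fin_cases μ <;> ext <;>
    simp [cnu, tessA, comp, Fin.sum_univ_four, conj, conjI, conjK, unitI, unitJ, unitK]

end Tess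

namespace Matrix

variable {l m n p : Type*}

lemma hT_kronecker (A : Matrix l m Tess) (B : Matrix n p Tess) :
    (A ⊗ₖ B).hT = A.hT ⊗ₖ B.hT := by
  ext1 ⟨i, j⟩ ⟨k, q⟩
  simp [hT, Tess.conj_mul]

lemma hT_one [DecidableEq n] : (1 : Matrix n n Tess).hT = 1 := by
  ext1 i j
  by_cases h : i = j <;> simp [hT, one_apply, h, eq_comm]

lemma kronecker_one_mulVec {α : Type*} [Semiring α] [Fintype m] [Fintype n] [DecidableEq n]
    (M : Matrix l m α) (v : m × n → α) :
    (M ⊗ₖ (1 : Matrix n n α)) *ᵥ v = fun p => ∑ j, M p.1 j * v (j, p.2) := by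
  ext ⟨i, a⟩
  simp [mulVec, dotProduct, Fintype.sum_prod_type, one_apply]

end Matrix

lemma half_smul_tessA_hT_mul_self :
    (Tess.ofReal (1/2) • tessA).hT * (Tess.ofReal (1/2) • tessA) = 1 := by
  ext1 i j
  fin_cases i <;> fin_cases j <;> ext <;>
    simp [Matrix.mul_apply, Fin.sum_univ_four, tessA, Matrix.hT, Tess.conj, Tess.unitI,
      Tess.unitJ, Tess.unitK] <;>
    norm_num

lemma Jn_eq_kronecker (n : ℕ) : Jn n = (Tess.ofReal (1/2) • tessA) ⊗ₖ 1 :=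
  (Matrix.smul_kronecker _ _ _).symm

lemma Jn_hT_mul_Jn (n : ℕ) : (Jn n).hT * Jn n = 1 := by
  rw [Jn_eq_kronecker, Matrix.hT_kronecker, Matrix.hT_one, ← Matrix.mul_kronecker_mul,
    half_smul_tessA_hT_mul_self, Matrix.one_mul, Matrix.one_kronecker_one]

lemma augv_eq_smul_Jn_mulVec_realv {n : ℕ} (x : Fin n → Tess) :
    augv x = Tess.ofReal 2 • (Jn n *ᵥ fun q => Tess.ofReal (realv x q)) := by
  ext1 ⟨μ, a⟩
  rw [Jn_eq_kronecker, Matrix.kronecker_one_mulVec, augv, Tess.cnu_eq_sum_tessA_mul_comp,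
    Pi.smul_apply, smul_eq_mul, Finset.mul_sum]
  refine Finset.sum_congr rfl fun ρ _ => ?_
  rw [Matrix.smul_apply, smul_eq_mul, ← mul_assoc, ← mul_assoc, ← Tess.ofReal_mul]
  norm_num [realv]

lemma diagonal_mulVec_realv {n : ℕ} (x y : Fin n → Tess) :
    Matrix.diagonal (fun q => Tess.ofReal (realv x q)) *ᵥ (fun q => Tess.ofReal (realv y q)) =
      fun q => Tess.ofReal (realv (vstar x y) q) := by
  ext1 q
  rw [Matrix.mulVec_diagonal, realv, realv, realv, vstar, Tess.comp_star4, Tess.ofReal_mul]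

/-- For tessarine vectors `x, y ∈ 𝕋ⁿ`, the augmented vector of the
componentwise product `x ⋆ y` satisfies `\overline{x ⋆ y} = 𝒟^x ȳ`, where
`𝒟^x = 𝒥ₙ diag(xʳ) 𝒥ₙᴴ`. -/
theorem augmented_star_product {n : ℕ} (x y : Fin n → Tess) :
    augv (vstar x y) =
      (Jn n * Matrix.diagonal (fun q => Tess.ofReal (realv x q)) * (Jn n).hT).mulVec
        (augv y) := by
  rw [augv_eq_smul_Jn_mulVec_realv y, augv_eq_smul_Jn_mulVec_realv (vstar x y),
    Matrix.mulVec_smul, Matrix.mulVec_mulVec, Matrix.mul_assoc, Jn_hT_mul_Jn, Matrix.mul_one,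
    ← Matrix.mulVec_mulVec, diagonal_mulVec_realv]
end
end

section
/- If x(t) ∈ 𝕋ⁿ is 𝕋₁-proper and widely factorizable with factors Ā(t), B̄(t) ∈ 𝕋^{4n×p}, then its augmented pseudo-autocorrelation is block diagonal: Γ_{x̄}(t,s) = diag(Γ_x(t,s), Γ_x(t,s)*, Γ_x(t,s)^ı, Γ_x(t,s)^κ) (the superscripts denoting entrywise application of the corresponding conjugation), and Γ_x(t,s) = A₁(t)B₁ᴴ(s) for t ≥ s and Γ_x(t,s) = B₁(t)A₁ᴴ(s) for t < s, where A₁(t) = [Iₙ, 0_{n×3n}]Ā(t) and B₁(t) = [Iₙ, 0_{n×3n}]B̄(t). -/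
open MeasureTheory Matrix
open scoped Kronecker

noncomputable section

/-! The four conjugations are ring automorphisms of `𝕋` forming a Klein four-group and
commuting with the expectation, so the `(a, b)` block of `Γ_{x̄}(t,s)` is the `a`-conjugate
of `Γ_{x x^ν}(t,s)` with `ν = a b`; `𝕋₁`-properness kills it unless `a = b`. The upper-left
block of `Ā(t)B̄ᴴ(s)` is `A₁(t)B₁ᴴ(s)`. -/

/-- Index law of the conjugations: `cnu a ∘ cnu b = cnu (cnuMul a b)`, the Klein four-group
(bitwise xor on the indices). -/
def cnuMul : Fin 4 → Fin 4 → Fin 4 :=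
  ![![0, 1, 2, 3], ![1, 0, 3, 2], ![2, 3, 0, 1], ![3, 2, 1, 0]]

lemma cnuMul_self (a : Fin 4) : cnuMul a a = 0 := by
  fin_cases a <;> rfl

lemma cnuMul_ne_zero {a b : Fin 4} (hab : a ≠ b) : cnuMul a b ≠ 0 := by
  fin_cases a <;> fin_cases b <;> simp_all [cnuMul]

lemma cnu_map_zero (a : Fin 4) : cnu a 0 = 0 := by
  fin_cases a <;> ext <;> simp [cnu, Tess.conj, Tess.conjI, Tess.conjK]

lemma cnu_mul_conj_cnu (a b : Fin 4) (z w : Tess) :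
    cnu a z * Tess.conj (cnu b w) = cnu a (z * Tess.conj (cnu (cnuMul a b) w)) := by
  fin_cases a <;> fin_cases b <;> ext <;>
    simp [cnu, cnuMul, Tess.conj, Tess.conjI, Tess.conjK] <;> ring

lemma texp_cnu {Ω : Type*} [MeasurableSpace Ω] (μ : Measure Ω) (a : Fin 4) (f : Ω → Tess) :
    texp μ (fun ω => cnu a (f ω)) = cnu a (texp μ f) := by
  fin_cases a <;> ext <;> simp [cnu, texp, Tess.conj, Tess.conjI, Tess.conjK, integral_neg]

section Augmented

variable {Ω : Type*} [MeasurableSpace Ω] (μ : Measure Ω) {n m : ℕ}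

lemma Gamma_augv_apply (x : Ω → Fin n → Tess) (y : Ω → Fin m → Tess) (a b : Fin 4)
    (i : Fin n) (j : Fin m) :
    Gamma μ (fun ω => augv (x ω)) (fun ω => augv (y ω)) (a, i) (b, j) =
      cnu a (Gamma μ x (fun ω => cnu (cnuMul a b) ∘ y ω) i j) := by
  simp only [Gamma, augv, of_apply, cnu_mul_conj_cnu, texp_cnu, Function.comp_apply]

lemma Gamma_augv_eq_blockDiagonal (x : Ω → Fin n → Tess) (y : Ω → Fin m → Tess)
    (h : ∀ ν ≠ 0, Gamma μ x (fun ω => cnu ν ∘ y ω) = 0) :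
    Gamma μ (fun ω => augv (x ω)) (fun ω => augv (y ω)) =
      Matrix.of fun q q' => if q.1 = q'.1 then cnu q.1 (Gamma μ x y q.2 q'.2) else 0 := by
  refine Matrix.ext fun ⟨a, i⟩ ⟨b, j⟩ => ?_
  rw [Gamma_augv_apply, of_apply]
  rcases eq_or_ne a b with rfl | hab
  · rw [if_pos rfl, cnuMul_self]
    rfl
  · rw [if_neg hab, h _ (cnuMul_ne_zero hab), Matrix.zero_apply, cnu_map_zero]

lemma Gamma_eq_submatrix_Gamma_augv (x : Ω → Fin n → Tess) (y : Ω → Fin m → Tess) :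
    Gamma μ x y =
      (Gamma μ (fun ω => augv (x ω)) (fun ω => augv (y ω))).submatrix (fun i => (0, i))
        (fun j => (0, j)) :=
  rfl

end Augmented

lemma CrossT1.Gamma_cnu_eq_zero {Ω T T' m m' : Type*} [MeasurableSpace Ω] {μ : Measure Ω}
    {x : T → Ω → m → Tess} {y : T' → Ω → m' → Tess} (h : CrossT1 μ x y) (t : T) (s : T')
    {ν : Fin 4} (hν : ν ≠ 0) : Gamma μ (x t) (fun ω => cnu ν ∘ y s ω) = 0 := by
  fin_cases ν
  · exact absurd rfl hν
  · exact (h t s).1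
  · exact (h t s).2.1
  · exact (h t s).2.2

lemma Matrix.submatrix_mul_hT {l m k q r : Type*} [Fintype k] (A : Matrix l k Tess)
    (B : Matrix m k Tess) (f : q → l) (g : r → m) :
    (A * B.hT).submatrix f g = A.submatrix f id * (B.submatrix g id).hT :=
  rfl

theorem T1proper_widely_factorizable_general {Ω : Type} [MeasurableSpace Ω]
    (μ : MeasureTheory.Measure Ω) {n p : ℕ}
    (x : ℤ → Ω → Fin n → Tess)
    (Abar Bbar : ℤ → Matrix (Fin 4 × Fin n) (Fin p) Tess)
    (hfac : ∀ t s : ℤ,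
      (s ≤ t → Gamma μ (fun ω => augv (x t ω)) (fun ω => augv (x s ω)) =
        Abar t * (Bbar s).hT) ∧
      (t < s → Gamma μ (fun ω => augv (x t ω)) (fun ω => augv (x s ω)) =
        Bbar t * (Abar s).hT))
    (hproper : T1proper μ x) :
    (∀ t s : ℤ, Gamma μ (fun ω => augv (x t ω)) (fun ω => augv (x s ω)) =
      Matrix.of fun q q' : Fin 4 × Fin n =>
        if q.1 = q'.1 then cnu q.1 (Gamma μ (x t) (x s) q.2 q'.2) else 0) ∧
    (∀ t s : ℤ,
      (s ≤ t → Gamma μ (x t) (x s) =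
        (Abar t).submatrix (fun i : Fin n => ((0 : Fin 4), i)) id *
          ((Bbar s).submatrix (fun i : Fin n => ((0 : Fin 4), i)) id).hT) ∧
      (t < s → Gamma μ (x t) (x s) =
        (Bbar t).submatrix (fun i : Fin n => ((0 : Fin 4), i)) id *
          ((Abar s).submatrix (fun i : Fin n => ((0 : Fin 4), i)) id).hT)) := by
  refine ⟨fun t s => Gamma_augv_eq_blockDiagonal μ _ _ fun ν hν =>
    CrossT1.Gamma_cnu_eq_zero hproper t s hν, fun t s => ⟨fun hst => ?_, fun hts => ?_⟩⟩
  · rw [Gamma_eq_submatrix_Gamma_augv, (hfac t s).1 hst, Matrix.submatrix_mul_hT]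
  · rw [Gamma_eq_submatrix_Gamma_augv, (hfac t s).2 hts, Matrix.submatrix_mul_hT]

/-- If `x(t) ∈ 𝕋ⁿ` is `𝕋₁`-proper and widely factorizable with factors
`Ā(t), B̄(t) ∈ 𝕋^{4n×p}`, then `Γ_{x̄}(t,s) = diag(Γ_x(t,s), Γ_x(t,s)*, Γ_x(t,s)^ı,
Γ_x(t,s)^κ)` and `Γ_x(t,s) = A₁(t)B₁ᴴ(s)` for `t ≥ s`, `Γ_x(t,s) = B₁(t)A₁ᴴ(s)` for
`t < s`, where `A₁(t) = [Iₙ, 0]Ā(t)` and `B₁(t) = [Iₙ, 0]B̄(t)`. -/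
theorem T1proper_widely_factorizable {Ω : Type} [MeasurableSpace Ω]
    (μ : MeasureTheory.Measure Ω) [MeasureTheory.IsProbabilityMeasure μ] {n p : ℕ}
    (x : ℤ → Ω → Fin n → Tess)
    (hzero : ∀ t, ZeroMean μ (x t)) (hL2 : ∀ t, SecondOrder μ (x t))
    (Abar Bbar : ℤ → Matrix (Fin 4 × Fin n) (Fin p) Tess)
    (hfac : ∀ t s : ℤ,
      (s ≤ t → Gamma μ (fun ω => augv (x t ω)) (fun ω => augv (x s ω)) =
        Abar t * (Bbar s).hT) ∧
      (t < s → Gamma μ (fun ω => augv (x t ω)) (fun ω => augv (x s ω)) =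
        Bbar t * (Abar s).hT))
    (hproper : T1proper μ x) :
    (∀ t s : ℤ, Gamma μ (fun ω => augv (x t ω)) (fun ω => augv (x s ω)) =
      Matrix.of fun q q' : Fin 4 × Fin n =>
        if q.1 = q'.1 then cnu q.1 (Gamma μ (x t) (x s) q.2 q'.2) else 0) ∧
    (∀ t s : ℤ,
      (s ≤ t → Gamma μ (x t) (x s) =
        (Abar t).submatrix (fun i : Fin n => ((0 : Fin 4), i)) id *
          ((Bbar s).submatrix (fun i : Fin n => ((0 : Fin 4), i)) id).hT) ∧
      (t < s → Gamma μ (x t) (x s) =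
        (Bbar t).submatrix (fun i : Fin n => ((0 : Fin 4), i)) id *
          ((Abar s).submatrix (fun i : Fin n => ((0 : Fin 4), i)) id).hT)) :=
  T1proper_widely_factorizable_general μ x Abar Bbar hfac hproper
end
end

section
/- Let x(t) ∈ 𝕋ⁿ be a zero-mean second-order signal whose augmented vector satisfies the linear state model x̄(t+1) = F̄(t)x̄(t) + w̄(t), t ≥ 0, where F̄(t) ∈ 𝕋^{4n×4n} are known deterministic matrices and w̄(t) is the augmented vector of a zero-mean tessarine white noise with E[w̄(t) x̄ᴴ(s)] = 0 for all s ≤ t. Assume the transition matrices Φ(t,0) = F̄(t−1)⋯F̄(0) (with Φ(0,0) = I₄ₙ) are invertible. Then for all t ≥ s ≥ 0, Γ_{x̄}(t,s) = Φ(t,0)Φ(s,0)⁻¹Γ_{x̄}(s,s); consequently, x(t) is widely factorizable with factors Ā(t) = Φ(t,0) and B̄(t) = Γ_{x̄}(t,t)Φ(t,0)^{−ᴴ}. -/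
open MeasureTheory Matrix
open scoped Kronecker

noncomputable section

/-!
Substituting the state equation into `Γ_{x̄}(t+1,s)` and using `E[w̄(t) x̄ᴴ(s)] = 0` for `s ≤ t`
gives the recursion `Γ_{x̄}(t+1,s) = F̄(t) Γ_{x̄}(t,s)`, whose solution starting at `t = s` is
`Φ(t,0) Φ(s,0)⁻¹ Γ_{x̄}(s,s)`. The factorization for `t < s` then follows from
`Γ_{x̄}(t,s)ᴴ = Γ_{x̄}(s,t)`. Moving the matrix `F̄(t)` out of the expectation needs the products
of components to be integrable, which holds because all components are in `L²`.
-/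

namespace Tess

instance : StarRing Tess where
  star := conj
  star_involutive a := by ext <;> simp [conj]
  star_mul a b := by ext <;> simp [conj] <;> ring
  star_add a b := by ext <;> simp [conj] <;> ring

lemma star_eq_conj (a : Tess) : star a = conj a := rfl

lemma ext_comp {a b : Tess} (h : ∀ ν, comp ν a = comp ν b) : a = b := by
  ext
  exacts [h 0, h 1, h 2, h 3]

def compAddHom (ν : Fin 4) : Tess →+ ℝ where
  toFun := comp ν
  map_zero' := by fin_cases ν <;> rfl
  map_add' a b := by fin_cases ν <;> rfl

lemma comp_sum {ι : Type*} (s : Finset ι) (f : ι → Tess) (ν : Fin 4) :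
    comp ν (∑ i ∈ s, f i) = ∑ i ∈ s, comp ν (f i) :=
  map_sum (compAddHom ν) f s

lemma comp_add (a b : Tess) (ν : Fin 4) : comp ν (a + b) = comp ν a + comp ν b :=
  map_add (compAddHom ν) a b

/-- Left multiplication by `a`, as a real matrix acting on the components `Tess.comp`. -/
def lmul (a : Tess) : Matrix (Fin 4) (Fin 4) ℝ :=
  !![a.re, -a.imI, a.imJ, -a.imK;
     a.imI, a.re, a.imK, a.imJ;
     a.imJ, -a.imK, a.re, -a.imI;
     a.imK, a.imJ, a.imI, a.re]

lemma comp_mul (a b : Tess) (ν : Fin 4) :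
    comp ν (a * b) = ∑ κ, lmul a ν κ * comp κ b := by
  fin_cases ν <;>
    simp only [comp, lmul, Fin.sum_univ_four, of_apply, cons_val', cons_val_zero, cons_val_one,
      cons_val, cons_val_fin_one, Fin.zero_eta, Fin.mk_one, Fin.reduceFinMk, Fin.isValue, mul_re,
      mul_imI, mul_imJ, mul_imK] <;>
    ring

end Tess

section Expectation

variable {Ω : Type*} [MeasurableSpace Ω] {μ : Measure Ω}

def CompIntegrable (μ : Measure Ω) (f : Ω → Tess) : Prop :=
  ∀ ν, Integrable (fun ω => Tess.comp ν (f ω)) μ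

def CompMemL2 (μ : Measure Ω) (f : Ω → Tess) : Prop :=
  ∀ ν, MemLp (fun ω => Tess.comp ν (f ω)) 2 μ

lemma comp_texp (f : Ω → Tess) (ν : Fin 4) :
    Tess.comp ν (texp μ f) = ∫ ω, Tess.comp ν (f ω) ∂μ := by
  fin_cases ν <;> rfl

lemma texp_add {f g : Ω → Tess} (hf : CompIntegrable μ f) (hg : CompIntegrable μ g) :
    texp μ (fun ω => f ω + g ω) = texp μ f + texp μ g :=
  Tess.ext_comp fun ν => by
    simp only [comp_texp, Tess.comp_add]
    exact integral_add (hf ν) (hg ν)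

lemma texp_sum {ι : Type*} (s : Finset ι) {f : ι → Ω → Tess}
    (hf : ∀ i ∈ s, CompIntegrable μ (f i)) :
    texp μ (fun ω => ∑ i ∈ s, f i ω) = ∑ i ∈ s, texp μ (f i) :=
  Tess.ext_comp fun ν => by
    simp only [comp_texp, Tess.comp_sum]
    exact integral_finsetSum s fun i hi => hf i hi ν

lemma texp_const_mul (c : Tess) {f : Ω → Tess} (hf : CompIntegrable μ f) :
    texp μ (fun ω => c * f ω) = c * texp μ f :=
  Tess.ext_comp fun ν => by
    simp only [comp_texp, Tess.comp_mul]
    rw [integral_finsetSum _ fun κ _ => (hf κ).const_mul _]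
    simp only [integral_const_mul]

lemma texp_conj (f : Ω → Tess) : texp μ (fun ω => Tess.conj (f ω)) = Tess.conj (texp μ f) := by
  ext <;> simp [texp, Tess.conj, integral_neg]

lemma CompIntegrable.sum {ι : Type*} (s : Finset ι) {f : ι → Ω → Tess}
    (hf : ∀ i ∈ s, CompIntegrable μ (f i)) : CompIntegrable μ (fun ω => ∑ i ∈ s, f i ω) :=
  fun ν => by
    simpa only [Tess.comp_sum] using integrable_finsetSum s fun i hi => hf i hi ν

lemma CompIntegrable.const_mul (c : Tess) {f : Ω → Tess} (hf : CompIntegrable μ f) :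
    CompIntegrable μ (fun ω => c * f ω) := fun ν => by
  simpa only [Tess.comp_mul] using integrable_finsetSum _ fun κ _ => (hf κ).const_mul _

-- Every entry of `lmul a` is `± comp ν a`; `exact` sees this by unfolding.
lemma CompMemL2.lmul {f : Ω → Tess} (hf : CompMemL2 μ f) (ν κ : Fin 4) :
    MemLp (fun ω => Tess.lmul (f ω) ν κ) 2 μ := by
  fin_cases ν <;> fin_cases κ <;>
    first
      | exact hf 0 | exact hf 1 | exact hf 2 | exact hf 3
      | exact (hf 1).neg | exact (hf 2).neg | exact (hf 3).neg

lemma CompMemL2.mul {f g : Ω → Tess} (hf : CompMemL2 μ f) (hg : CompMemL2 μ g) :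
    CompIntegrable μ (fun ω => f ω * g ω) := fun ν => by
  simp only [Tess.comp_mul]
  exact integrable_finsetSum _ fun κ _ => (hf.lmul ν κ).integrable_mul (hg κ)

lemma CompMemL2.cnu {f : Ω → Tess} (hf : CompMemL2 μ f) (k : Fin 4) :
    CompMemL2 μ (fun ω => cnu k (f ω)) := by
  intro ν
  fin_cases k <;> fin_cases ν <;>
    first
      | exact hf 0 | exact hf 1 | exact hf 2 | exact hf 3
      | exact (hf 1).neg | exact (hf 2).neg | exact (hf 3).neg

lemma CompMemL2.conj {f : Ω → Tess} (hf : CompMemL2 μ f) :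
    CompMemL2 μ (fun ω => Tess.conj (f ω)) :=
  hf.cnu 1

end Expectation

lemma Matrix.hT_eq_conjTranspose {m m' : Type*} (M : Matrix m m' Tess) : M.hT = Mᴴ := rfl

lemma Matrix.eq_mul_inv_mul_of_forall_succ {R n m : Type*} [CommRing R] [Fintype n]
    [DecidableEq n] {Φ F : ℕ → Matrix n n R} {G : ℕ → Matrix n m R}
    (hΦ : ∀ t, Φ (t + 1) = F t * Φ t) {s : ℕ} (hs : IsUnit (Φ s))
    (hG : ∀ t, s ≤ t → G (t + 1) = F t * G t) (t : ℕ) (hst : s ≤ t) :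
    G t = Φ t * (Φ s)⁻¹ * G s := by
  induction t, hst using Nat.le_induction with
  | base => rw [Matrix.mul_nonsing_inv _ ((Matrix.isUnit_iff_isUnit_det _).1 hs), Matrix.one_mul]
  | succ t hst ih => rw [hG t hst, ih, hΦ, Matrix.mul_assoc, Matrix.mul_assoc, Matrix.mul_assoc]

section Correlation

variable {Ω m m' k : Type*} [MeasurableSpace Ω] {μ : Measure Ω}

lemma SecondOrder.augv {n : ℕ} {x : Ω → Fin n → Tess} (hx : SecondOrder μ x) :
    SecondOrder μ (fun ω => augv (x ω)) :=
  fun p => CompMemL2.cnu (hx p.2) p.1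

lemma compIntegrable_mul_conj {x : Ω → m → Tess} {y : Ω → m' → Tess} (hx : SecondOrder μ x)
    (hy : SecondOrder μ y) (a : m) (b : m') :
    CompIntegrable μ (fun ω => x ω a * Tess.conj (y ω b)) :=
  CompMemL2.mul (hx a) (CompMemL2.conj (hy b))

lemma Gamma_mulVec_add_left [Fintype k] (M : Matrix m k Tess) {u : Ω → k → Tess}
    {v : Ω → m → Tess} {y : Ω → m' → Tess} (hu : SecondOrder μ u) (hv : SecondOrder μ v)
    (hy : SecondOrder μ y) :
    Gamma μ (fun ω => M *ᵥ u ω + v ω) y = M * Gamma μ u y + Gamma μ v y := by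
  ext a b : 1
  have hu' j := compIntegrable_mul_conj hu hy j b
  have hexpand : (fun ω => (M *ᵥ u ω + v ω) a * Tess.conj (y ω b)) =
      fun ω => (∑ j, M a j * (u ω j * Tess.conj (y ω b))) + v ω a * Tess.conj (y ω b) := by
    funext ω
    simp only [Pi.add_apply, mulVec, dotProduct, add_mul, Finset.sum_mul, mul_assoc]
  simp only [Gamma, of_apply, hexpand, Matrix.add_apply, mul_apply]
  rw [texp_add (.sum _ fun j _ => (hu' j).const_mul _) (compIntegrable_mul_conj hv hy a b),
    texp_sum _ fun j _ => (hu' j).const_mul _]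
  simp only [texp_const_mul _ (hu' _)]

lemma conjTranspose_Gamma (x : Ω → m → Tess) (y : Ω → m' → Tess) :
    (Gamma μ x y)ᴴ = Gamma μ y x := by
  ext a b : 1
  simp only [Gamma, conjTranspose_apply, of_apply, Tess.star_eq_conj, ← texp_conj]
  congr 1
  funext ω
  simp only [← Tess.star_eq_conj, star_mul', star_star]
  exact mul_comm _ _

end Correlation

theorem stateModel_widely_factorizable_general {Ω : Type} [MeasurableSpace Ω]
    (μ : MeasureTheory.Measure Ω) {n : ℕ}
    (x : ℕ → Ω → Fin n → Tess) (w : ℕ → Ω → Fin n → Tess)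
    (hL2 : ∀ t, SecondOrder μ (x t))
    (hw_L2 : ∀ t, SecondOrder μ (w t))
    (F : ℕ → Matrix (Fin 4 × Fin n) (Fin 4 × Fin n) Tess)
    (hstate : ∀ t ω, augv (x (t+1) ω) = (F t).mulVec (augv (x t ω)) + augv (w t ω))
    (horth : ∀ t s : ℕ, s ≤ t →
      Gamma μ (fun ω => augv (w t ω)) (fun ω => augv (x s ω)) = 0)
    (Phi : ℕ → Matrix (Fin 4 × Fin n) (Fin 4 × Fin n) Tess)
    (hPhiS : ∀ t, Phi (t+1) = F t * Phi t)
    (hinv : ∀ t, IsUnit (Phi t)) :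
    (∀ t s : ℕ, s ≤ t →
      Gamma μ (fun ω => augv (x t ω)) (fun ω => augv (x s ω)) =
        Phi t * (Phi s)⁻¹ * Gamma μ (fun ω => augv (x s ω)) (fun ω => augv (x s ω))) ∧
    (∀ t s : ℕ,
      (s ≤ t → Gamma μ (fun ω => augv (x t ω)) (fun ω => augv (x s ω)) =
        Phi t * (Gamma μ (fun ω => augv (x s ω)) (fun ω => augv (x s ω)) *
          ((Phi s)⁻¹).hT).hT) ∧
      (t < s → Gamma μ (fun ω => augv (x t ω)) (fun ω => augv (x s ω)) =
        (Gamma μ (fun ω => augv (x t ω)) (fun ω => augv (x t ω)) * ((Phi t)⁻¹).hT) *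
          (Phi s).hT)) := by
  have hstep : ∀ s t, s ≤ t →
      Gamma μ (fun ω => augv (x (t + 1) ω)) (fun ω => augv (x s ω)) =
        F t * Gamma μ (fun ω => augv (x t ω)) (fun ω => augv (x s ω)) := fun s t hst => by
    simp only [funext (hstate t)]
    rw [Gamma_mulVec_add_left _ (hL2 t).augv (hw_L2 t).augv (hL2 s).augv, horth t s hst,
      add_zero]
  have hcausal : ∀ t s, s ≤ t →
      Gamma μ (fun ω => augv (x t ω)) (fun ω => augv (x s ω)) =
        Phi t * (Phi s)⁻¹ * Gamma μ (fun ω => augv (x s ω)) (fun ω => augv (x s ω)) :=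
    fun t s hst => eq_mul_inv_mul_of_forall_succ
      (G := fun t => Gamma μ (fun ω => augv (x t ω)) (fun ω => augv (x s ω))) hPhiS (hinv s)
      (hstep s) t hst
  refine ⟨hcausal, fun t s => ⟨fun hst => ?_, fun hts => ?_⟩⟩
  · simp only [hT_eq_conjTranspose, conjTranspose_mul, conjTranspose_conjTranspose,
      conjTranspose_Gamma, hcausal t s hst, Matrix.mul_assoc]
  · rw [← conjTranspose_Gamma, hcausal s t hts.le]
    simp only [hT_eq_conjTranspose, conjTranspose_mul, conjTranspose_Gamma, Matrix.mul_assoc]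

/-- A signal whose augmented vector follows the linear state model
`x̄(t+1) = F̄(t)x̄(t) + w̄(t)` with invertible transition matrices `Φ(t,0)` satisfies
`Γ_{x̄}(t,s) = Φ(t,0)Φ(s,0)⁻¹Γ_{x̄}(s,s)` for `t ≥ s`, and hence is widely factorizable
with `Ā(t) = Φ(t,0)` and `B̄(t) = Γ_{x̄}(t,t)Φ(t,0)^{−ᴴ}`. -/
theorem stateModel_widely_factorizable {Ω : Type} [MeasurableSpace Ω]
    (μ : MeasureTheory.Measure Ω) [MeasureTheory.IsProbabilityMeasure μ] {n : ℕ}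
    (x : ℕ → Ω → Fin n → Tess) (w : ℕ → Ω → Fin n → Tess)
    (hzero : ∀ t, ZeroMean μ (x t)) (hL2 : ∀ t, SecondOrder μ (x t))
    (hw_zero : ∀ t, ZeroMean μ (w t)) (hw_L2 : ∀ t, SecondOrder μ (w t))
    (F : ℕ → Matrix (Fin 4 × Fin n) (Fin 4 × Fin n) Tess)
    (hstate : ∀ t ω, augv (x (t+1) ω) = (F t).mulVec (augv (x t ω)) + augv (w t ω))
    (hwhite : ∀ t s : ℕ, t ≠ s →
      Gamma μ (fun ω => augv (w t ω)) (fun ω => augv (w s ω)) = 0)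
    (horth : ∀ t s : ℕ, s ≤ t →
      Gamma μ (fun ω => augv (w t ω)) (fun ω => augv (x s ω)) = 0)
    (Phi : ℕ → Matrix (Fin 4 × Fin n) (Fin 4 × Fin n) Tess)
    (hPhi0 : Phi 0 = 1) (hPhiS : ∀ t, Phi (t+1) = F t * Phi t)
    (hinv : ∀ t, IsUnit (Phi t)) :
    (∀ t s : ℕ, s ≤ t →
      Gamma μ (fun ω => augv (x t ω)) (fun ω => augv (x s ω)) =
        Phi t * (Phi s)⁻¹ * Gamma μ (fun ω => augv (x s ω)) (fun ω => augv (x s ω))) ∧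
    (∀ t s : ℕ,
      (s ≤ t → Gamma μ (fun ω => augv (x t ω)) (fun ω => augv (x s ω)) =
        Phi t * (Gamma μ (fun ω => augv (x s ω)) (fun ω => augv (x s ω)) *
          ((Phi s)⁻¹).hT).hT) ∧
      (t < s → Gamma μ (fun ω => augv (x t ω)) (fun ω => augv (x s ω)) =
        (Gamma μ (fun ω => augv (x t ω)) (fun ω => augv (x t ω)) * ((Phi t)⁻¹).hT) *
          (Phi s).hT)) :=
  stateModel_widely_factorizable_general μ x w hL2 hw_L2 F hstate horth Phi hPhiS hinv
end
end
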